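/- arXiv:2103.06629 — 7 statements merged into one kernel-verified Lean document; each statement's English description precedes it below -/
import Mathlib

section
/- If f is μ-strongly convex (μ ≥ 0) then for each λ > 0 the function (1 + λμ) f_λ is μ-strongly convex and its gradient ∇((1+λμ)f_λ)(x) = ((1+λμ)/λ)(x - prox_{λf}(x)) is (μ + 1/λ)-Lipschitz continuous. -/
/-!
The point `prox x` minimises `y ↦ f y + ‖y - x‖² / (2λ)`, which is `(μ + 1/λ)`-strongly convex.
Comparing this objective at `prox x₁` and `prox x₂` gives firm nonexpansiveness
`(1 + λμ) ‖prox x₁ - prox x₂‖² ≤ ⟪prox x₁ - prox x₂, x₁ - x₂⟫`, so `prox` and `id - prox` are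
nonexpansive; the latter is the Lipschitz bound. Evaluating the envelope at `prox x` and `prox z`
traps `f_λ z - f_λ x - ⟪(x - prox x)/λ, z - x⟫` between `±‖z - x‖² / (2λ)`, which gives the
gradient. For strong convexity, bound `f_λ (a x₁ + b x₂)` by the objective at
`a prox x₁ + b prox x₂`; the resulting defect term dominates `μ/2 ‖x₁ - x₂‖²` after multiplication
by `1 + λμ`, by the identity `t ‖v‖² + ‖(1 + t) u - v‖² = (1 + t) (t ‖u‖² + ‖u - v‖²)` with `t = λμ`.
-/

open Set Filter Topology InnerProductSpace

section

variable {H : Type*} [NormedAddCommGroup H]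

section InnerProductSpace

variable [InnerProductSpace ℝ H]

lemma norm_smul_add_smul_sq {a b : ℝ} (hab : a + b = 1) (u v : H) :
    ‖a • u + b • v‖ ^ 2 = a * ‖u‖ ^ 2 + b * ‖v‖ ^ 2 - a * b * ‖u - v‖ ^ 2 := by
  rw [norm_add_sq_real, norm_sub_sq_real, norm_smul, norm_smul, real_inner_smul_left,
    real_inner_smul_right, Real.norm_eq_abs, Real.norm_eq_abs, mul_pow, mul_pow, sq_abs, sq_abs]
  obtain rfl := eq_sub_of_add_eq hab
  ring

lemma two_mul_inner_sub_sub (a b c d : H) :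
    2 * ⟪a - b, c - d⟫_ℝ = ‖a - d‖ ^ 2 + ‖b - c‖ ^ 2 - ‖a - c‖ ^ 2 - ‖b - d‖ ^ 2 := by
  simp only [norm_sub_sq_real, inner_sub_left, inner_sub_right]
  ring

lemma mul_norm_sq_le_one_add_mul (t : ℝ) (u v : H) :
    t * ‖v‖ ^ 2 ≤ (1 + t) * (t * ‖u‖ ^ 2 + ‖u - v‖ ^ 2) := by
  have key : (1 + t) * (t * ‖u‖ ^ 2 + ‖u - v‖ ^ 2) = t * ‖v‖ ^ 2 + ‖(1 + t) • u - v‖ ^ 2 := by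
    rw [norm_sub_sq_real, norm_sub_sq_real, norm_smul, real_inner_smul_left, Real.norm_eq_abs,
      mul_pow, sq_abs]
    ring
  rw [key]
  exact le_add_of_nonneg_right (sq_nonneg _)

lemma norm_le_of_norm_sq_le_inner {u v : H} (h : ‖u‖ ^ 2 ≤ ⟪u, v⟫_ℝ) : ‖u‖ ≤ ‖v‖ := by
  have := h.trans (real_inner_le_norm u v)
  nlinarith [norm_nonneg u, norm_nonneg v]

lemma norm_sub_le_of_norm_sq_le_inner {u v : H} (h : ‖u‖ ^ 2 ≤ ⟪u, v⟫_ℝ) : ‖v - u‖ ≤ ‖v‖ := by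
  have hsq : ‖v - u‖ ^ 2 ≤ ‖v‖ ^ 2 := by
    rw [norm_sub_sq_real, real_inner_comm]
    nlinarith [sq_nonneg ‖u‖]
  exact (pow_le_pow_iff_left₀ (norm_nonneg _) (norm_nonneg _) two_ne_zero).mp hsq

lemma StrongConvexOn.add_norm_sub_sq_div {s : Set H} {m : ℝ} {f : H → ℝ}
    (hf : StrongConvexOn s m f) (lam : ℝ) (x : H) :
    StrongConvexOn s (m + 1 / lam) (fun y => f y + ‖y - x‖ ^ 2 / (2 * lam)) := by
  rw [strongConvexOn_iff_convex] at hf ⊢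
  have haffine : ConvexOn ℝ s fun y : H => (‖x‖ ^ 2 - 2 * ⟪y, x⟫_ℝ) / (2 * lam) := by
    refine ⟨hf.1, fun y _ z _ a b _ _ hab => le_of_eq ?_⟩
    simp only [inner_add_left, real_inner_smul_left, smul_eq_mul]
    obtain rfl := eq_sub_of_add_eq hab
    ring
  refine (hf.add haffine).congr fun y _ => ?_
  simp only [Pi.add_apply, norm_sub_sq_real]
  ring

lemma StrongConvexOn.add_sq_norm_sub_le_of_isMinOn {s : Set H} {m : ℝ} {F : H → ℝ}
    (hF : StrongConvexOn s m F) {p : H} (hp : IsMinOn F s p) (hps : p ∈ s) {y : H}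
    (hy : y ∈ s) : F p + m / 2 * ‖y - p‖ ^ 2 ≤ F y := by
  have approx : ∀ t ∈ Ioc (0 : ℝ) 1, F p + (1 - t) * (m / 2 * ‖y - p‖ ^ 2) ≤ F y := by
    rintro t ⟨ht0, ht1⟩
    have hconv := hF.2 hps hy (sub_nonneg.2 ht1) ht0.le (by ring)
    have hmin : F p ≤ F ((1 - t) • p + t • y) :=
      hp (hF.1 hps hy (sub_nonneg.2 ht1) ht0.le (by ring))
    rw [smul_eq_mul, smul_eq_mul, norm_sub_rev] at hconv
    nlinarith
  have hlim : Tendsto (fun t : ℝ => F p + (1 - t) * (m / 2 * ‖y - p‖ ^ 2)) (𝓝[>] 0)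
      (𝓝 (F p + (1 - 0) * (m / 2 * ‖y - p‖ ^ 2))) :=
    (Continuous.tendsto (by fun_prop) 0).mono_left nhdsWithin_le_nhds
  simpa using le_of_tendsto hlim (mem_of_superset (Ioc_mem_nhdsGT zero_lt_one) approx)

lemma HasGradientAt.const_mul [CompleteSpace H] {g : H → ℝ} {v x : H}
    (h : HasGradientAt g v x) (c : ℝ) : HasGradientAt (fun z => c * g z) (c • v) x := by
  rw [hasGradientAt_iff_hasFDerivAt] at h ⊢
  rw [map_smulₛₗ, starRingEnd_apply, star_trivial]
  exact h.const_smul c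

lemma hasGradientAt_of_abs_sub_sub_inner_le [CompleteSpace H] {g : H → ℝ} {v x : H} {C : ℝ}
    (h : ∀ z, |g z - g x - ⟪v, z - x⟫_ℝ| ≤ C * ‖z - x‖ ^ 2) : HasGradientAt g v x := by
  rw [hasGradientAt_iff_isLittleO_nhds_zero]
  refine Asymptotics.IsBigO.trans_isLittleO ?_ (Asymptotics.isLittleO_norm_pow_id one_lt_two)
  refine Asymptotics.IsBigO.of_bound C (Eventually.of_forall fun w => ?_)
  simpa using h (x + w)

end InnerProductSpace

noncomputable def moreauEnvelope (f : H → ℝ) (lam : ℝ) (x : H) : ℝ :=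
  ⨅ y, f y + ‖y - x‖ ^ 2 / (2 * lam)

def IsProxMap (f : H → ℝ) (lam : ℝ) (prox : H → H) : Prop :=
  ∀ x, IsMinOn (fun y => f y + ‖y - x‖ ^ 2 / (2 * lam)) univ (prox x)

namespace IsProxMap

variable {f : H → ℝ} {lam : ℝ} {prox : H → H}

lemma moreauEnvelope_le (hprox : IsProxMap f lam prox) (x y : H) :
    moreauEnvelope f lam x ≤ f y + ‖y - x‖ ^ 2 / (2 * lam) :=
  ciInf_le ⟨_, forall_mem_range.2 fun y => hprox x (mem_univ y)⟩ y

lemma moreauEnvelope_eq (hprox : IsProxMap f lam prox) (x : H) :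
    moreauEnvelope f lam x = f (prox x) + ‖prox x - x‖ ^ 2 / (2 * lam) :=
  le_antisymm (hprox.moreauEnvelope_le x (prox x)) (le_ciInf fun y => hprox x (mem_univ y))

variable [InnerProductSpace ℝ H] {μ : ℝ}

lemma moreauEnvelope_sub_le (hprox : IsProxMap f lam prox) (x z : H) :
    moreauEnvelope f lam z - moreauEnvelope f lam x
      ≤ ⟪lam⁻¹ • (x - prox x), z - x⟫_ℝ + ‖z - x‖ ^ 2 / (2 * lam) := by
  have hz := hprox.moreauEnvelope_le z (prox x)
  have hsq : ‖prox x - z‖ ^ 2 = ‖prox x - x‖ ^ 2 - 2 * ⟪prox x - x, z - x⟫_ℝ + ‖z - x‖ ^ 2 := by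
    rw [← norm_sub_sq_real, sub_sub_sub_cancel_right]
  rw [hprox.moreauEnvelope_eq x, real_inner_smul_left, ← neg_sub (prox x), inner_neg_left]
  linear_combination hz + hsq / (2 * lam)

lemma le_moreauEnvelope_sub (hprox : IsProxMap f lam prox) (x z : H) :
    ⟪lam⁻¹ • (x - prox x), z - x⟫_ℝ + (‖z - x‖ ^ 2 - 2 * ⟪prox z - prox x, z - x⟫_ℝ) / (2 * lam)
      ≤ moreauEnvelope f lam z - moreauEnvelope f lam x := by
  have hx := hprox.moreauEnvelope_le x (prox z)
  have hsq : ‖prox z - z‖ ^ 2 = ‖prox z - x‖ ^ 2 - 2 * ⟪prox z - x, z - x⟫_ℝ + ‖z - x‖ ^ 2 := by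
    rw [← norm_sub_sq_real, sub_sub_sub_cancel_right]
  have hsplit : ⟪prox z - prox x, z - x⟫_ℝ = ⟪prox z - x, z - x⟫_ℝ - ⟪prox x - x, z - x⟫_ℝ := by
    rw [← inner_sub_left, sub_sub_sub_cancel_right]
  rw [hprox.moreauEnvelope_eq z, real_inner_smul_left, ← neg_sub (prox x), inner_neg_left]
  linear_combination hx - hsq / (2 * lam) - hsplit / lam

lemma hasGradientAt_moreauEnvelope [CompleteSpace H] (hprox : IsProxMap f lam prox)
    (hlam : 0 < lam) (hlip : LipschitzWith 1 prox) (x : H) :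
    HasGradientAt (moreauEnvelope f lam) (lam⁻¹ • (x - prox x)) x := by
  refine hasGradientAt_of_abs_sub_sub_inner_le (C := 1 / (2 * lam)) fun z => abs_le.2 ⟨?_, ?_⟩
  · have hinner : ⟪prox z - prox x, z - x⟫_ℝ ≤ ‖z - x‖ ^ 2 :=
      calc ⟪prox z - prox x, z - x⟫_ℝ ≤ ‖prox z - prox x‖ * ‖z - x‖ := real_inner_le_norm _ _
        _ ≤ ‖z - x‖ * ‖z - x‖ := by gcongr; simpa using hlip.norm_sub_le z x
        _ = ‖z - x‖ ^ 2 := (sq _).symm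
    have hdiv : -(1 / (2 * lam) * ‖z - x‖ ^ 2)
        ≤ (‖z - x‖ ^ 2 - 2 * ⟪prox z - prox x, z - x⟫_ℝ) / (2 * lam) := by
      rw [neg_le, ← neg_div, one_div_mul_eq_div]
      gcongr
      linarith
    linarith [hprox.le_moreauEnvelope_sub x z]
  · rw [one_div_mul_eq_div]
    linarith [hprox.moreauEnvelope_sub_le x z]

lemma mul_norm_sub_sq_le_inner (hf : StrongConvexOn univ μ f) (hprox : IsProxMap f lam prox)
    (hlam : 0 < lam) (x₁ x₂ : H) :
    (1 + lam * μ) * ‖prox x₁ - prox x₂‖ ^ 2 ≤ ⟪prox x₁ - prox x₂, x₁ - x₂⟫_ℝ := by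
  have h₁ := (hf.add_norm_sub_sq_div lam x₁).add_sq_norm_sub_le_of_isMinOn (hprox x₁)
    (mem_univ _) (mem_univ (prox x₂))
  have h₂ := (hf.add_norm_sub_sq_div lam x₂).add_sq_norm_sub_le_of_isMinOn (hprox x₂)
    (mem_univ _) (mem_univ (prox x₁))
  have hpolar := two_mul_inner_sub_sub (prox x₁) (prox x₂) x₁ x₂
  rw [norm_sub_rev (prox x₂)] at h₁
  have hsum : (μ + 1 / lam) * ‖prox x₁ - prox x₂‖ ^ 2 ≤ ⟪prox x₁ - prox x₂, x₁ - x₂⟫_ℝ / lam := by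
    linear_combination h₁ + h₂ - hpolar / (2 * lam)
  calc (1 + lam * μ) * ‖prox x₁ - prox x₂‖ ^ 2
      = lam * ((μ + 1 / lam) * ‖prox x₁ - prox x₂‖ ^ 2) := by field_simp; ring
    _ ≤ lam * (⟪prox x₁ - prox x₂, x₁ - x₂⟫_ℝ / lam) := by gcongr
    _ = ⟪prox x₁ - prox x₂, x₁ - x₂⟫_ℝ := by field_simp

lemma norm_sub_sq_le_inner (hμ : 0 ≤ μ) (hf : StrongConvexOn univ μ f)
    (hprox : IsProxMap f lam prox) (hlam : 0 < lam) (x₁ x₂ : H) :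
    ‖prox x₁ - prox x₂‖ ^ 2 ≤ ⟪prox x₁ - prox x₂, x₁ - x₂⟫_ℝ :=
  (le_mul_of_one_le_left (sq_nonneg _) (by nlinarith)).trans
    (hprox.mul_norm_sub_sq_le_inner hf hlam x₁ x₂)

lemma lipschitzWith_one (hμ : 0 ≤ μ) (hf : StrongConvexOn univ μ f)
    (hprox : IsProxMap f lam prox) (hlam : 0 < lam) : LipschitzWith 1 prox :=
  LipschitzWith.of_dist_le_mul fun x₁ x₂ => by
    simpa [dist_eq_norm] using
      norm_le_of_norm_sq_le_inner (hprox.norm_sub_sq_le_inner hμ hf hlam x₁ x₂)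

lemma norm_sub_prox_sub_sub_prox_le (hμ : 0 ≤ μ) (hf : StrongConvexOn univ μ f)
    (hprox : IsProxMap f lam prox) (hlam : 0 < lam) (x₁ x₂ : H) :
    ‖(x₁ - prox x₁) - (x₂ - prox x₂)‖ ≤ ‖x₁ - x₂‖ := by
  rw [sub_sub_sub_comm]
  exact norm_sub_le_of_norm_sq_le_inner (hprox.norm_sub_sq_le_inner hμ hf hlam x₁ x₂)

lemma moreauEnvelope_convexCombination_le (hf : StrongConvexOn univ μ f)
    (hprox : IsProxMap f lam prox) {a b : ℝ} (ha : 0 ≤ a) (hb : 0 ≤ b) (hab : a + b = 1)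
    (x₁ x₂ : H) :
    moreauEnvelope f lam (a • x₁ + b • x₂)
      ≤ a * moreauEnvelope f lam x₁ + b * moreauEnvelope f lam x₂
        - a * b * (μ / 2 * ‖prox x₁ - prox x₂‖ ^ 2
          + ‖(prox x₁ - prox x₂) - (x₁ - x₂)‖ ^ 2 / (2 * lam)) := by
  have hle := hprox.moreauEnvelope_le (a • x₁ + b • x₂) (a • prox x₁ + b • prox x₂)
  have hconv := hf.2 (mem_univ (prox x₁)) (mem_univ (prox x₂)) ha hb hab
  have hcomb : a • prox x₁ + b • prox x₂ - (a • x₁ + b • x₂)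
      = a • (prox x₁ - x₁) + b • (prox x₂ - x₂) := by
    simp only [smul_sub]; abel
  have hsq := norm_smul_add_smul_sq hab (prox x₁ - x₁) (prox x₂ - x₂)
  rw [sub_sub_sub_comm] at hsq
  rw [hcomb, hsq] at hle
  rw [smul_eq_mul, smul_eq_mul] at hconv
  rw [hprox.moreauEnvelope_eq x₁, hprox.moreauEnvelope_eq x₂]
  linear_combination hle + hconv

lemma strongConvexOn_moreauEnvelope (hμ : 0 ≤ μ) (hf : StrongConvexOn univ μ f)
    (hprox : IsProxMap f lam prox) (hlam : 0 < lam) :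
    StrongConvexOn univ μ (fun x => (1 + lam * μ) * moreauEnvelope f lam x) := by
  refine ⟨convex_univ, fun x₁ _ x₂ _ a b ha hb hab => ?_⟩
  set D := μ / 2 * ‖prox x₁ - prox x₂‖ ^ 2 + ‖(prox x₁ - prox x₂) - (x₁ - x₂)‖ ^ 2 / (2 * lam)
    with hD_def
  have hD : μ / 2 * ‖x₁ - x₂‖ ^ 2 ≤ (1 + lam * μ) * D := by
    have := mul_norm_sq_le_one_add_mul (lam * μ) (prox x₁ - prox x₂) (x₁ - x₂)
    calc μ / 2 * ‖x₁ - x₂‖ ^ 2 = lam * μ * ‖x₁ - x₂‖ ^ 2 / (2 * lam) := by field_simp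
      _ ≤ (1 + lam * μ) * (lam * μ * ‖prox x₁ - prox x₂‖ ^ 2
            + ‖(prox x₁ - prox x₂) - (x₁ - x₂)‖ ^ 2) / (2 * lam) := by gcongr
      _ = (1 + lam * μ) * D := by rw [hD_def]; field_simp
  have hcombo := hprox.moreauEnvelope_convexCombination_le hf ha hb hab x₁ x₂
  simp only [smul_eq_mul]
  set e := moreauEnvelope f lam
  calc (1 + lam * μ) * e (a • x₁ + b • x₂)
      ≤ (1 + lam * μ) * (a * e x₁ + b * e x₂ - a * b * D) := by gcongr
    _ = a * ((1 + lam * μ) * e x₁) + b * ((1 + lam * μ) * e x₂) - a * b * ((1 + lam * μ) * D) := by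
        ring
    _ ≤ a * ((1 + lam * μ) * e x₁) + b * ((1 + lam * μ) * e x₂)
        - a * b * (μ / 2 * ‖x₁ - x₂‖ ^ 2) := by gcongr

end IsProxMap

end

theorem stmt_4_general {H : Type*} [NormedAddCommGroup H] [InnerProductSpace ℝ H]
    [CompleteSpace H]
    (μ : ℝ) (hμ : 0 ≤ μ)
    (f : H → ℝ) (hf : StrongConvexOn Set.univ μ f)
    (lam : ℝ) (hlam : 0 < lam)
    (prox : H → H)
    (hprox : ∀ x : H,
      IsMinOn (fun y => f y + ‖y - x‖ ^ 2 / (2 * lam)) Set.univ (prox x)) :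
    StrongConvexOn Set.univ μ
      (fun x => (1 + lam * μ) * (⨅ y : H, f y + ‖y - x‖ ^ 2 / (2 * lam))) ∧
    (∀ x : H,
      HasGradientAt
        (fun z => (1 + lam * μ) * (⨅ y : H, f y + ‖y - z‖ ^ 2 / (2 * lam)))
        (((1 + lam * μ) / lam) • (x - prox x)) x) ∧
    (∀ x₁ x₂ : H,
      ‖((1 + lam * μ) / lam) • (x₁ - prox x₁) - ((1 + lam * μ) / lam) • (x₂ - prox x₂)‖
        ≤ (μ + 1 / lam) * ‖x₁ - x₂‖) := by
  replace hprox : IsProxMap f lam prox := hprox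
  refine ⟨hprox.strongConvexOn_moreauEnvelope hμ hf hlam, fun x => ?_, fun x₁ x₂ => ?_⟩
  · have hgrad := (hprox.hasGradientAt_moreauEnvelope hlam
      (hprox.lipschitzWith_one hμ hf hlam) x).const_mul (1 + lam * μ)
    rwa [smul_smul, ← div_eq_mul_inv] at hgrad
  · rw [← smul_sub, norm_smul, Real.norm_of_nonneg (by positivity),
      show μ + 1 / lam = (1 + lam * μ) / lam by field_simp; ring]
    gcongr
    exact hprox.norm_sub_prox_sub_sub_prox_le hμ hf hlam x₁ x₂

/-- If `f` is μ-strongly convex, then `(1+λμ) f_λ` is μ-strongly convex, its gradient at `x`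
is `((1+λμ)/λ)(x - prox_{λf}(x))`, and this gradient is `(μ + 1/λ)`-Lipschitz. -/
theorem stmt_4 {H : Type*} [NormedAddCommGroup H] [InnerProductSpace ℝ H]
    [CompleteSpace H]
    (μ : ℝ) (hμ : 0 ≤ μ)
    (f : H → ℝ) (hf : StrongConvexOn Set.univ μ f) (hlsc : LowerSemicontinuous f)
    (lam : ℝ) (hlam : 0 < lam)
    (prox : H → H)
    (hprox : ∀ x : H,
      IsMinOn (fun y => f y + ‖y - x‖ ^ 2 / (2 * lam)) Set.univ (prox x)) :
    StrongConvexOn Set.univ μ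
      (fun x => (1 + lam * μ) * (⨅ y : H, f y + ‖y - x‖ ^ 2 / (2 * lam))) ∧
    (∀ x : H,
      HasGradientAt
        (fun z => (1 + lam * μ) * (⨅ y : H, f y + ‖y - z‖ ^ 2 / (2 * lam)))
        (((1 + lam * μ) / lam) • (x - prox x)) x) ∧
    (∀ x₁ x₂ : H,
      ‖((1 + lam * μ) / lam) • (x₁ - prox x₁) - ((1 + lam * μ) / lam) • (x₂ - prox x₂)‖
        ≤ (μ + 1 / lam) * ‖x₁ - x₂‖) :=
  stmt_4_general μ hμ f hf lam hlam prox hprox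
end

section
/- The proximal mapping of a μ-strongly convex function is firmly nonexpansive in the strengthened sense: (1 + λμ)‖prox_{λf}(x) - prox_{λf}(y)‖² ≤ ⟨prox_{λf}(x) - prox_{λf}(y), x - y⟩ for all x, y ∈ H and λ > 0. -/
/-!
Both regularised objectives `z ↦ f z + ‖z - w‖² / (2λ)` are `(μ + 1/λ)`-strongly convex, and
a strongly convex function grows quadratically away from its minimiser (let `t → 0` in the
strong convexity inequality on the segment from the minimiser). Comparing the values at `p`
and `q` of the objective for `x` and of the one for `y` and adding, the `f`-terms cancel and
the four squared distances combine into `2⟪p - q, x - y⟫`.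
-/

open RealInnerProductSpace Filter Set Topology

section StrongConvexity

variable {E : Type*} [NormedAddCommGroup E]

section NormedSpace

variable [NormedSpace ℝ E] {s : Set E} {m n : ℝ} {f g : E → ℝ}

lemma StrongConvexOn.add (hf : StrongConvexOn s m f) (hg : StrongConvexOn s n g) :
    StrongConvexOn s (m + n) (f + g) :=
  (UniformConvexOn.add hf hg).mono fun r ↦ le_of_eq (by simp only [Pi.add_apply]; ring)

lemma StrongConvexOn.div_const (hf : StrongConvexOn s m f) {c : ℝ} (hc : 0 ≤ c) :
    StrongConvexOn s (m / c) fun x ↦ f x / c := by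
  refine ⟨hf.1, fun x hx y hy a b ha hb hab ↦ ?_⟩
  have h := hf.2 hx hy ha hb hab
  simp only [smul_eq_mul] at h ⊢
  calc f (a • x + b • y) / c
      ≤ (a * f x + b * f y - a * b * (m / 2 * ‖x - y‖ ^ 2)) / c := by gcongr
    _ = a * (f x / c) + b * (f y / c) - a * b * (m / c / 2 * ‖x - y‖ ^ 2) := by ring

lemma StrongConvexOn.add_le_of_isMinOn {p q : E} (hg : StrongConvexOn s m g)
    (hmin : IsMinOn g s p) (hp : p ∈ s) (hq : q ∈ s) :
    g p + m / 2 * ‖p - q‖ ^ 2 ≤ g q := by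
  have hstep : ∀ t ∈ Ioo (0 : ℝ) 1, g p + (1 - t) * (m / 2 * ‖p - q‖ ^ 2) ≤ g q := by
    intro t ⟨ht0, ht1⟩
    have hcomb := hg.1 hp hq (sub_nonneg.2 ht1.le) ht0.le (sub_add_cancel 1 t)
    have hconv := hg.2 hp hq (sub_nonneg.2 ht1.le) ht0.le (sub_add_cancel 1 t)
    simp only [smul_eq_mul] at hconv
    have hmul : t * (g p + (1 - t) * (m / 2 * ‖p - q‖ ^ 2)) ≤ t * g q := by
      have hle : g p ≤ g ((1 - t) • p + t • q) := hmin hcomb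
      linarith
    exact le_of_mul_le_mul_left hmul ht0
  have hlim : Tendsto (fun t : ℝ ↦ g p + (1 - t) * (m / 2 * ‖p - q‖ ^ 2)) (𝓝[>] 0)
      (𝓝 (g p + m / 2 * ‖p - q‖ ^ 2)) := by
    have : Continuous fun t : ℝ ↦ g p + (1 - t) * (m / 2 * ‖p - q‖ ^ 2) := by fun_prop
    simpa using (this.tendsto 0).mono_left nhdsWithin_le_nhds
  exact le_of_tendsto hlim (eventually_of_mem (Ioo_mem_nhdsGT one_pos) hstep)

end NormedSpace

variable [InnerProductSpace ℝ E]

lemma strongConvexOn_univ_norm_sub_sq (x : E) :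
    StrongConvexOn univ 2 fun z ↦ ‖z - x‖ ^ 2 := by
  rw [strongConvexOn_iff_convex]
  have h : ConvexOn ℝ univ fun z ↦ ‖x‖ ^ 2 + ((-2 : ℝ) • innerₛₗ ℝ x) z :=
    (convexOn_const _ convex_univ).add (LinearMap.convexOn _ convex_univ)
  convert h using 2 with z
  simp only [norm_sub_sq_real, LinearMap.smul_apply, innerₛₗ_apply_apply, smul_eq_mul,
    real_inner_comm]
  ring

lemma two_mul_inner_sub_sub_eq (p q x y : E) :
    2 * ⟪p - q, x - y⟫ = ‖q - x‖ ^ 2 - ‖p - x‖ ^ 2 + ‖p - y‖ ^ 2 - ‖q - y‖ ^ 2 := by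
  simp only [norm_sub_sq_real, inner_sub_left, inner_sub_right]
  ring

end StrongConvexity

theorem stmt_5_general {H : Type*} [NormedAddCommGroup H] [InnerProductSpace ℝ H]
    (μ : ℝ)
    (f : H → ℝ) (hf : StrongConvexOn Set.univ μ f)
    (lam : ℝ) (hlam : 0 < lam)
    (x y p q : H)
    (hp : IsMinOn (fun z => f z + ‖z - x‖ ^ 2 / (2 * lam)) Set.univ p)
    (hq : IsMinOn (fun z => f z + ‖z - y‖ ^ 2 / (2 * lam)) Set.univ q) :
    (1 + lam * μ) * ‖p - q‖ ^ 2 ≤ ⟪p - q, x - y⟫ := by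
  have hsc : ∀ w : H, StrongConvexOn univ (μ + 2 / (2 * lam))
      (fun z => f z + ‖z - w‖ ^ 2 / (2 * lam)) := fun w ↦
    hf.add ((strongConvexOn_univ_norm_sub_sq w).div_const (by positivity))
  have hpq := (hsc x).add_le_of_isMinOn hp (mem_univ p) (mem_univ q)
  have hqp := (hsc y).add_le_of_isMinOn hq (mem_univ q) (mem_univ p)
  rw [norm_sub_rev q p] at hqp
  have hsum : (μ + 1 / lam) * ‖p - q‖ ^ 2 ≤ ⟪p - q, x - y⟫ / lam := by
    rw [← mul_div_cancel_left₀ ⟪p - q, x - y⟫ two_ne_zero,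
      two_mul_inner_sub_sub_eq]
    field_simp
    field_simp at hpq hqp
    linarith
  calc (1 + lam * μ) * ‖p - q‖ ^ 2 = lam * ((μ + 1 / lam) * ‖p - q‖ ^ 2) := by
        field_simp; ring
    _ ≤ lam * (⟪p - q, x - y⟫ / lam) := by gcongr
    _ = ⟪p - q, x - y⟫ := mul_div_cancel₀ _ hlam.ne'

/-- Strengthened firm nonexpansiveness of the proximal mapping of a μ-strongly
convex function. -/
theorem stmt_5 {H : Type*} [NormedAddCommGroup H] [InnerProductSpace ℝ H]
    (μ : ℝ) (hμ : 0 ≤ μ)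
    (f : H → ℝ) (hf : StrongConvexOn Set.univ μ f) (hlsc : LowerSemicontinuous f)
    (lam : ℝ) (hlam : 0 < lam)
    (x y p q : H)
    (hp : IsMinOn (fun z => f z + ‖z - x‖ ^ 2 / (2 * lam)) Set.univ p)
    (hq : IsMinOn (fun z => f z + ‖z - y‖ ^ 2 / (2 * lam)) Set.univ q) :
    (1 + lam * μ) * ‖p - q‖ ^ 2 ≤ ⟪p - q, x - y⟫ :=
  stmt_5_general μ f hf lam hlam x y p q hp hq
end

section
/- If w is a type-2 approximation of prox_{λf}(x) with ε-precision, i.e. (x - w)/λ ∈ ∂_{ε²/(2λ)} f(w), then w is a type-1 approximation with the same precision, i.e. f(w) + (1/(2λ))‖w - x‖² ≤ ε²/(2λ) + f_λ(x). -/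
open RealInnerProductSpace

/-- A type-2 approximation of the proximal point is a type-1 approximation:
if `(x - w)/λ` belongs to the `ε²/(2λ)`-subdifferential of `f` at `w`, then
`f(w) + ‖w-x‖²/(2λ) ≤ ε²/(2λ) + f_λ(x)`. -/
theorem stmt_6 {H : Type*} [NormedAddCommGroup H] [InnerProductSpace ℝ H]
    (f : H → ℝ) (hconv : ConvexOn ℝ Set.univ f) (hlsc : LowerSemicontinuous f)
    (lam ε : ℝ) (hlam : 0 < lam) (hε : 0 < ε) (x w : H)
    (h2 : ∀ y : H,
      f y ≥ f w + ⟪lam⁻¹ • (x - w), y - w⟫ - ε ^ 2 / (2 * lam)) :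
    f w + ‖w - x‖ ^ 2 / (2 * lam)
      ≤ ε ^ 2 / (2 * lam) + ⨅ y : H, f y + ‖y - x‖ ^ 2 / (2 * lam) := by
  have key : ∀ y : H, f w + ‖w - x‖ ^ 2 / (2 * lam) - ε ^ 2 / (2 * lam)
      ≤ f y + ‖y - x‖ ^ 2 / (2 * lam) := by
    intro y
    have h := h2 y
    rw [real_inner_smul_left] at h
    have hexp : ‖y - x‖ ^ 2 = ‖y - w‖ ^ 2 + 2 * ⟪y - w, w - x⟫ + ‖w - x‖ ^ 2 := by
      have hyx : y - x = (y - w) + (w - x) := by abel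
      rw [hyx, norm_add_sq_real]
    have hsym : ⟪x - w, y - w⟫ = - ⟪y - w, w - x⟫ := by
      rw [real_inner_comm, ← neg_sub w x, inner_neg_right]
    have hl : (0:ℝ) < 2 * lam := by linarith
    rw [hsym] at h
    rw [hexp]
    have hn : (0:ℝ) ≤ ‖y - w‖ ^ 2 := sq_nonneg _
    have hu : (0:ℝ) < (2 * lam)⁻¹ := inv_pos.mpr hl
    have hu2 : lam⁻¹ = 2 * (2 * lam)⁻¹ := by
      field_simp
    rw [div_eq_mul_inv] at h ⊢
    rw [div_eq_mul_inv, div_eq_mul_inv] at *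
    rw [hu2] at h
    nlinarith [h, mul_nonneg hn (le_of_lt hu)]
  have hle := le_ciInf key
  linarith
end

section
/- A type-3 approximation implies a type-1 approximation: if dist(0, ∂φ_λ(w)) ≤ ε/λ with φ_λ(y) = f(y) + (1/(2λ))‖y-x‖², then f(w) + (1/(2λ))‖w - x‖² ≤ ε²/(2λ) + f_λ(x). -/
/-!
The proximal objective `φ y = f y + ‖y - x‖² / (2λ)` is `λ⁻¹`-strongly convex, so a subgradient
`p ∈ ∂φ(w)` gives the quadratic minorant `φ y ≥ φ w + ⟪p, y - w⟫ + ‖y - w‖² / (2λ)`, whose minimum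
over `y` is `φ w - λ ‖p‖² / 2`. Hence `φ w - inf φ ≤ λ ‖p‖² / 2` for every `p ∈ ∂φ(w)`, and taking
the infimum over `p` bounds the gap by `λ dist(0, ∂φ(w))² / 2 ≤ ε² / (2λ)`.
-/

open RealInnerProductSpace

open Set Filter Topology

lemma le_of_forall_mem_Ioo_add_one_sub_mul_le {a b c : ℝ}
    (h : ∀ t ∈ Ioo (0 : ℝ) 1, a + (1 - t) * b ≤ c) : a + b ≤ c := by
  have hlim : Tendsto (fun t : ℝ ↦ a + (1 - t) * b) (𝓝[>] 0) (𝓝 (a + b)) := by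
    have hcont : Continuous fun t : ℝ ↦ a + (1 - t) * b := by fun_prop
    simpa using (hcont.tendsto 0).mono_left nhdsWithin_le_nhds
  exact le_of_tendsto hlim (eventually_of_mem (Ioo_mem_nhdsGT one_pos) h)

lemma Metric.le_infDist_sq {X : Type*} [PseudoMetricSpace X] {s : Set X} {x : X} {a : ℝ}
    (hs : s.Nonempty) (h : ∀ y ∈ s, a ≤ dist x y ^ 2) : a ≤ infDist x s ^ 2 := by
  have : √a ≤ infDist x s :=
    (le_infDist hs).2 fun y hy ↦ Real.sqrt_le_iff.2 ⟨dist_nonneg, h y hy⟩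
  exact (Real.sqrt_le_iff.1 this).2

section StrongConvexity

variable {E : Type*} [NormedAddCommGroup E] [InnerProductSpace ℝ E]

lemma strongConvexOn_univ_sq_norm_sub (m : ℝ) (x : E) :
    StrongConvexOn univ m fun y ↦ m / 2 * ‖y - x‖ ^ 2 := by
  rw [strongConvexOn_iff_convex]
  have affine : (fun y ↦ m / 2 * ‖y - x‖ ^ 2 - m / 2 * ‖y‖ ^ 2)
      = fun y ↦ m / 2 * ‖x‖ ^ 2 + (-m) * innerSL ℝ x y := by
    ext y
    rw [innerSL_apply_apply, real_inner_comm, norm_sub_sq_real]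
    ring
  rw [affine]
  exact (convexOn_const _ convex_univ).add
    (((-m) • (innerSL ℝ x).toLinearMap).convexOn convex_univ)

lemma ConvexOn.strongConvexOn_add_sq_norm_sub {f : E → ℝ} (hf : ConvexOn ℝ univ f)
    (m : ℝ) (x : E) : StrongConvexOn univ m fun y ↦ f y + m / 2 * ‖y - x‖ ^ 2 := by
  have h := (strongConvexOn_zero.mpr hf).add (strongConvexOn_univ_sq_norm_sub m x)
  unfold StrongConvexOn at h ⊢
  convert h using 2 <;> simp

lemma StrongConvexOn.add_inner_add_sq_norm_le {s : Set E} {m : ℝ} {φ : E → ℝ}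
    (hφ : StrongConvexOn s m φ) {w p : E} (hw : w ∈ s)
    (hp : ∀ y ∈ s, φ w + ⟪p, y - w⟫ ≤ φ y) {y : E} (hy : y ∈ s) :
    φ w + ⟪p, y - w⟫ + m / 2 * ‖y - w‖ ^ 2 ≤ φ y := by
  -- compare both inequalities at `(1 - t) • w + t • y`, divide by `t` and let `t → 0⁺`
  refine le_of_forall_mem_Ioo_add_one_sub_mul_le fun t ⟨ht0, ht1⟩ ↦ ?_
  have hseg := hφ.2 hw hy (sub_pos.2 ht1).le ht0.le (sub_add_cancel 1 t)
  have hsub := hp _ (hφ.1 hw hy (sub_pos.2 ht1).le ht0.le (sub_add_cancel 1 t))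
  have hdir : (1 - t) • w + t • y - w = t • (y - w) := by module
  rw [hdir, real_inner_smul_right] at hsub
  simp only [smul_eq_mul, norm_sub_rev w y] at hseg
  have : t * (φ w + ⟪p, y - w⟫ + (1 - t) * (m / 2 * ‖y - w‖ ^ 2)) ≤ t * φ y := by linarith
  exact le_of_mul_le_mul_left this ht0

lemma neg_sq_norm_div_le_inner_add_sq_norm {m : ℝ} (hm : 0 < m) (p v : E) :
    -(‖p‖ ^ 2 / (2 * m)) ≤ ⟪p, v⟫ + m / 2 * ‖v‖ ^ 2 := by
  have hsq : 0 ≤ ‖m • v + p‖ ^ 2 := sq_nonneg _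
  rw [norm_add_sq_real, norm_smul, real_inner_smul_left, Real.norm_of_nonneg hm.le,
    real_inner_comm] at hsq
  rw [neg_le_iff_add_nonneg', div_add' _ _ _ (by positivity)]
  exact div_nonneg (by nlinarith) (by positivity)

lemma StrongConvexOn.sub_iInf_le_sq_norm_div {m : ℝ} {φ : E → ℝ}
    (hφ : StrongConvexOn univ m φ) (hm : 0 < m) {w p : E}
    (hp : ∀ y, φ w + ⟪p, y - w⟫ ≤ φ y) :
    φ w - ⨅ y, φ y ≤ ‖p‖ ^ 2 / (2 * m) := by
  rw [sub_le_comm]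
  refine le_ciInf fun y ↦ ?_
  have := hφ.add_inner_add_sq_norm_le (mem_univ w) (fun y _ ↦ hp y) (mem_univ y)
  linarith [neg_sq_norm_div_le_inner_add_sq_norm hm p (y - w)]

end StrongConvexity

theorem stmt_8_general {H : Type*} [NormedAddCommGroup H] [InnerProductSpace ℝ H]
    (f : H → ℝ) (hconv : ConvexOn ℝ Set.univ f)
    (lam ε : ℝ) (hlam : 0 < lam) (x w : H)
    (hne : ({p : H | ∀ y : H,
        f y + ‖y - x‖ ^ 2 / (2 * lam)
          ≥ f w + ‖w - x‖ ^ 2 / (2 * lam) + ⟪p, y - w⟫}).Nonempty)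
    (hdist : Metric.infDist (0 : H)
        {p : H | ∀ y : H,
          f y + ‖y - x‖ ^ 2 / (2 * lam)
            ≥ f w + ‖w - x‖ ^ 2 / (2 * lam) + ⟪p, y - w⟫} ≤ ε / lam) :
    f w + ‖w - x‖ ^ 2 / (2 * lam)
      ≤ ε ^ 2 / (2 * lam) + ⨅ y : H, f y + ‖y - x‖ ^ 2 / (2 * lam) := by
  set φ : H → ℝ := fun y ↦ f y + ‖y - x‖ ^ 2 / (2 * lam)
  have hφ : StrongConvexOn univ lam⁻¹ φ := by
    convert hconv.strongConvexOn_add_sq_norm_sub lam⁻¹ x using 3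
    ring
  have hgap : ∀ p ∈ {p : H | ∀ y, φ y ≥ φ w + ⟪p, y - w⟫},
      2 / lam * (φ w - ⨅ y, φ y) ≤ dist 0 p ^ 2 := by
    intro p hp
    have := hφ.sub_iInf_le_sq_norm_div (inv_pos.2 hlam) hp
    rw [dist_zero_left, div_mul_eq_mul_div, div_le_iff₀ hlam]
    field_simp at this
    linarith
  have hsq := (Metric.le_infDist_sq hne hgap).trans
    (pow_le_pow_left₀ Metric.infDist_nonneg hdist 2)
  rw [div_pow, le_div_iff₀ (by positivity),
    show 2 / lam * (φ w - ⨅ y, φ y) * lam ^ 2 = (φ w - ⨅ y, φ y) * (2 * lam) by field_simp,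
    ← le_div_iff₀ (by positivity)] at hsq
  exact sub_le_iff_le_add.1 hsq

/-- A type-3 approximation is a type-1 approximation:
`dist(0, ∂φ_λ(w)) ≤ ε/λ` implies `f(w) + ‖w-x‖²/(2λ) ≤ ε²/(2λ) + f_λ(x)`. -/
theorem stmt_8 {H : Type*} [NormedAddCommGroup H] [InnerProductSpace ℝ H]
    [CompleteSpace H]
    (f : H → ℝ) (hconv : ConvexOn ℝ Set.univ f) (hlsc : LowerSemicontinuous f)
    (lam ε : ℝ) (hlam : 0 < lam) (hε : 0 < ε) (x w : H)
    (hne : ({p : H | ∀ y : H,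
        f y + ‖y - x‖ ^ 2 / (2 * lam)
          ≥ f w + ‖w - x‖ ^ 2 / (2 * lam) + ⟪p, y - w⟫}).Nonempty)
    (hdist : Metric.infDist (0 : H)
        {p : H | ∀ y : H,
          f y + ‖y - x‖ ^ 2 / (2 * lam)
            ≥ f w + ‖w - x‖ ^ 2 / (2 * lam) + ⟪p, y - w⟫} ≤ ε / lam) :
    f w + ‖w - x‖ ^ 2 / (2 * lam)
      ≤ ε ^ 2 / (2 * lam) + ⨅ y : H, f y + ‖y - x‖ ^ 2 / (2 * lam) :=
  stmt_8_general f hconv lam ε hlam x w hne hdist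
end

section
/- Let γ₀ > 0, Q > 0 and define sequences (α_k), (γ_k) by Q α_k² = γ_k (1 + α_k) with α_k > 0 and γ_{k+1} = γ_k - α_k γ_{k+1} (i.e. q = 0). Then for all k ≥ 1, Q/(√γ₀ · k + √Q)² ≤ Π_{i=0}^{k-1} 1/(1+α_i) ≤ 4Q/(√γ₀ · k + 2√Q)², and moreover √γ₀/(√γ₀ k + √Q) ≤ α_k ≤ 2√Q α₀/(√γ₀ k + 2√Q). -/
/-!
Write `s k = √(γ k)`. The root equation and `γ (k + 1) = γ k / (1 + α k)` give
`√Q * α k * s (k + 1) = s k ^ 2`, hence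
`√Q (s k - s (k + 1)) (s k + s (k + 1)) = s k ^ 2 s (k + 1)`.
Since `s (k + 1) ≤ s k`, the reciprocals `1 / s k` grow by between `1 / (2 √Q)` and `1 / √Q`
per step, which pins `s k` between `√γ₀ √Q / (√γ₀ k + √Q)` and `2 √γ₀ √Q / (√γ₀ k + 2 √Q)`.
The product telescopes to `(s k / s 0) ^ 2`. For `α k`: `√Q α k = s k ^ 2 / s (k + 1) ≥ s k`, and
since the root `α` increases with `γ`, `α k ≤ α 0`, so `Q (α k s 0) ^ 2 ≤ Q (α 0 s k) ^ 2`.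
-/

open Real Finset

theorem le_of_mul_sq_eq_mul_one_add {Q a b c d : ℝ} (hQ : 0 < Q) (ha : 0 < a) (hb : 0 < b)
    (hcd : c ≤ d) (hac : Q * a ^ 2 = c * (1 + a)) (hbd : Q * b ^ 2 = d * (1 + b)) : a ≤ b := by
  have : Q * a ^ 2 * (1 + b) ≤ Q * b ^ 2 * (1 + a) := by
    rw [hac, hbd]
    have h1a : (0 : ℝ) < 1 + a := by linarith
    have h1b : (0 : ℝ) < 1 + b := by linarith
    nlinarith [mul_nonneg (sub_nonneg.2 hcd) (mul_pos h1a h1b).le]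
  nlinarith [mul_pos hQ (by positivity : 0 < a + b + a * b)]

theorem sqrt_mul_mul_sqrt_div_one_add {Q a c : ℝ} (hQ : 0 ≤ Q) (ha : 0 ≤ a) (hc : 0 ≤ c)
    (h : Q * a ^ 2 = c * (1 + a)) : √Q * a * √(c / (1 + a)) = c := by
  have hsq : Q * a ^ 2 * (c / (1 + a)) = c ^ 2 := by
    rw [h]; field_simp
  have hQa : √Q * a = √(Q * a ^ 2) := by rw [sqrt_mul hQ, sqrt_sq ha]
  rw [hQa, ← sqrt_mul (by positivity), hsq, sqrt_sq hc]

theorem one_div_sqrt_div_one_add_sub_one_div_sqrt_mem_Icc {Q a c : ℝ} (hQ : 0 < Q) (ha : 0 < a)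
    (hc : 0 < c) (h : Q * a ^ 2 = c * (1 + a)) :
    1 / √(c / (1 + a)) - 1 / √c ∈ Set.Icc (1 / (2 * √Q)) (1 / √Q) := by
  set x := √c
  set y := √(c / (1 + a))
  have hq : 0 < √Q := sqrt_pos.2 hQ
  have hx : 0 < x := sqrt_pos.2 hc
  have hy : 0 < y := sqrt_pos.2 (by positivity)
  have hyx : y ≤ x := sqrt_le_sqrt (div_le_self hc.le (by linarith))
  have hy2 : y ^ 2 * (1 + a) = x ^ 2 := by
    rw [sq_sqrt hc.le, sq_sqrt (by positivity)]; field_simp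
  -- `x² - y² = a y²` and `√Q a y = x²` combine to the difference equation for `x, y` alone
  have hdiff : √Q * ((x - y) * (x + y)) = x ^ 2 * y := by
    have hkey : √Q * a * y = x ^ 2 := by
      rw [sqrt_mul_mul_sqrt_div_one_add hQ.le ha.le hc.le h, sq_sqrt hc.le]
    linear_combination y * hkey - √Q * hy2
  rw [Set.mem_Icc, div_sub_div _ _ hy.ne' hx.ne', div_le_div_iff₀ (by positivity) (by positivity),
    div_le_div_iff₀ (by positivity) hq]
  constructor <;> nlinarith [mul_pos hx hy, mul_nonneg hq.le (sub_nonneg.2 hyx)]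

theorem add_mul_le_of_le_sub_succ {t : ℕ → ℝ} {c : ℝ} (h : ∀ k, c ≤ t (k + 1) - t k) (k : ℕ) :
    t 0 + k * c ≤ t k := by
  induction k with
  | zero => simp
  | succ k ih => push_cast; linarith [h k]

theorem le_add_mul_of_sub_succ_le {t : ℕ → ℝ} {c : ℝ} (h : ∀ k, t (k + 1) - t k ≤ c) (k : ℕ) :
    t k ≤ t 0 + k * c := by
  induction k with
  | zero => simp
  | succ k ih => push_cast; linarith [h k]

theorem prod_one_div_one_add_eq_div {α γ : ℕ → ℝ} (hγ0 : γ 0 ≠ 0)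
    (hrec : ∀ k, γ (k + 1) = γ k / (1 + α k)) (k : ℕ) :
    ∏ i ∈ range k, 1 / (1 + α i) = γ k / γ 0 := by
  induction k with
  | zero => simp [hγ0]
  | succ k ih => rw [prod_range_succ, ih, hrec]; ring

section Recursion

variable {Q : ℝ} {α γ : ℕ → ℝ}

theorem gamma_pos (hγ0 : 0 < γ 0) (hα : ∀ k, 0 < α k)
    (hrec : ∀ k, γ (k + 1) = γ k / (1 + α k)) (k : ℕ) : 0 < γ k := by
  induction k with
  | zero => exact hγ0
  | succ k ih => rw [hrec]; have := hα k; positivity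

theorem gamma_antitone (hγ0 : 0 < γ 0) (hα : ∀ k, 0 < α k)
    (hrec : ∀ k, γ (k + 1) = γ k / (1 + α k)) : Antitone γ :=
  antitone_nat_of_succ_le fun k => by
    rw [hrec]; exact div_le_self (gamma_pos hγ0 hα hrec k).le (by linarith [hα k])

theorem sqrt_gamma_mem_Icc (hQ : 0 < Q) (hγ0 : 0 < γ 0) (hα : ∀ k, 0 < α k)
    (hroot : ∀ k, Q * α k ^ 2 = γ k * (1 + α k)) (hrec : ∀ k, γ (k + 1) = γ k / (1 + α k))
    (k : ℕ) :
    √(γ k) ∈ Set.Icc (√(γ 0) * √Q / (√(γ 0) * k + √Q))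
      (2 * √(γ 0) * √Q / (√(γ 0) * k + 2 * √Q)) := by
  have hg : 0 < √(γ 0) := sqrt_pos.2 hγ0
  have hstep (k : ℕ) :
      1 / √(γ (k + 1)) - 1 / √(γ k) ∈ Set.Icc (1 / (2 * √Q)) (1 / √Q) := by
    rw [hrec k]
    exact one_div_sqrt_div_one_add_sub_one_div_sqrt_mem_Icc hQ (hα k) (gamma_pos hγ0 hα hrec k)
      (hroot k)
  have hlo := add_mul_le_of_le_sub_succ (t := fun k => 1 / √(γ k)) (fun k => (hstep k).1) k
  have hhi := le_add_mul_of_sub_succ_le (t := fun k => 1 / √(γ k)) (fun k => (hstep k).2) k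
  constructor
  · calc √(γ 0) * √Q / (√(γ 0) * k + √Q) = 1 / (1 / √(γ 0) + k * (1 / √Q)) := by
          field_simp; ring
      _ ≤ 1 / (1 / √(γ k)) := one_div_le_one_div_of_le
          (one_div_pos.2 (sqrt_pos.2 (gamma_pos hγ0 hα hrec k))) hhi
      _ = √(γ k) := one_div_one_div _
  · calc √(γ k) = 1 / (1 / √(γ k)) := (one_div_one_div _).symm
      _ ≤ 1 / (1 / √(γ 0) + k * (1 / (2 * √Q))) := one_div_le_one_div_of_le
          (add_pos_of_pos_of_nonneg (one_div_pos.2 hg) (by positivity)) hlo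
      _ = 2 * √(γ 0) * √Q / (√(γ 0) * k + 2 * √Q) := by field_simp; ring

theorem sqrt_gamma_le_sqrt_mul_alpha (hQ : 0 < Q) (hγ0 : 0 < γ 0) (hα : ∀ k, 0 < α k)
    (hroot : ∀ k, Q * α k ^ 2 = γ k * (1 + α k)) (hrec : ∀ k, γ (k + 1) = γ k / (1 + α k))
    (k : ℕ) : √(γ k) ≤ √Q * α k := by
  have hγ := gamma_pos hγ0 hα hrec k
  have hs : 0 < √(γ k) := sqrt_pos.2 hγ
  have hkey : √Q * α k * √(γ (k + 1)) = √(γ k) ^ 2 := by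
    rw [hrec, sqrt_mul_mul_sqrt_div_one_add hQ.le (hα k).le hγ.le (hroot k), sq_sqrt hγ.le]
  have hmono : √(γ (k + 1)) ≤ √(γ k) := sqrt_le_sqrt (gamma_antitone hγ0 hα hrec k.le_succ)
  nlinarith [mul_le_mul_of_nonneg_left hmono (mul_pos (sqrt_pos.2 hQ) (hα k)).le]

theorem alpha_mul_sqrt_gamma_zero_le (hQ : 0 < Q) (hγ0 : 0 < γ 0) (hα : ∀ k, 0 < α k)
    (hroot : ∀ k, Q * α k ^ 2 = γ k * (1 + α k)) (hrec : ∀ k, γ (k + 1) = γ k / (1 + α k))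
    (k : ℕ) : α k * √(γ 0) ≤ α 0 * √(γ k) := by
  have hγ := gamma_pos hγ0 hα hrec k
  have hγle : γ k ≤ γ 0 := gamma_antitone hγ0 hα hrec k.zero_le
  have hαle : α k ≤ α 0 := le_of_mul_sq_eq_mul_one_add hQ (hα k) (hα 0) hγle (hroot k) (hroot 0)
  have hsq : Q * (α k * √(γ 0)) ^ 2 ≤ Q * (α 0 * √(γ k)) ^ 2 := by
    rw [mul_pow, mul_pow, sq_sqrt hγ0.le, sq_sqrt hγ.le, ← mul_assoc, ← mul_assoc, hroot, hroot]
    nlinarith [mul_nonneg (mul_nonneg hγ.le hγ0.le) (sub_nonneg.2 hαle)]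
  exact (pow_le_pow_iff_left₀ (by have := hα k; positivity) (by have := hα 0; positivity)
    two_ne_zero).1 (le_of_mul_le_mul_left hsq hQ)

theorem prod_one_div_one_add_mem_Icc (hQ : 0 < Q) (hγ0 : 0 < γ 0) (hα : ∀ k, 0 < α k)
    (hroot : ∀ k, Q * α k ^ 2 = γ k * (1 + α k)) (hrec : ∀ k, γ (k + 1) = γ k / (1 + α k))
    (k : ℕ) :
    ∏ i ∈ range k, 1 / (1 + α i) ∈
      Set.Icc (Q / (√(γ 0) * k + √Q) ^ 2) (4 * Q / (√(γ 0) * k + 2 * √Q) ^ 2) := by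
  obtain ⟨hlo, hhi⟩ := sqrt_gamma_mem_Icc hQ hγ0 hα hroot hrec k
  have hprod : ∏ i ∈ range k, 1 / (1 + α i) = (√(γ k) / √(γ 0)) ^ 2 := by
    rw [prod_one_div_one_add_eq_div hγ0.ne' hrec, div_pow,
      sq_sqrt (gamma_pos hγ0 hα hrec k).le, sq_sqrt hγ0.le]
  rw [hprod]
  constructor
  · calc Q / (√(γ 0) * k + √Q) ^ 2 = (√(γ 0) * √Q / (√(γ 0) * k + √Q) / √(γ 0)) ^ 2 := by
          field_simp; rw [sq_sqrt hQ.le]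
      _ ≤ (√(γ k) / √(γ 0)) ^ 2 := by gcongr
  · calc (√(γ k) / √(γ 0)) ^ 2
        ≤ (2 * √(γ 0) * √Q / (√(γ 0) * k + 2 * √Q) / √(γ 0)) ^ 2 := by gcongr
      _ = 4 * Q / (√(γ 0) * k + 2 * √Q) ^ 2 := by
          field_simp; rw [sq_sqrt hQ.le]; norm_num

theorem alpha_mem_Icc (hQ : 0 < Q) (hγ0 : 0 < γ 0) (hα : ∀ k, 0 < α k)
    (hroot : ∀ k, Q * α k ^ 2 = γ k * (1 + α k)) (hrec : ∀ k, γ (k + 1) = γ k / (1 + α k))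
    (k : ℕ) :
    α k ∈ Set.Icc (√(γ 0) / (√(γ 0) * k + √Q)) (2 * √Q * α 0 / (√(γ 0) * k + 2 * √Q)) := by
  obtain ⟨hlo, hhi⟩ := sqrt_gamma_mem_Icc hQ hγ0 hα hroot hrec k
  have hg : 0 < √(γ 0) := sqrt_pos.2 hγ0
  have hq : 0 < √Q := sqrt_pos.2 hQ
  constructor
  · calc √(γ 0) / (√(γ 0) * k + √Q) = √(γ 0) * √Q / (√(γ 0) * k + √Q) / √Q := by
          field_simp
      _ ≤ √(γ k) / √Q := by gcongr
      _ ≤ α k := div_le_of_le_mul₀ hq.le (hα k).le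
          (by rw [mul_comm]; exact sqrt_gamma_le_sqrt_mul_alpha hQ hγ0 hα hroot hrec k)
  · calc α k ≤ α 0 * √(γ k) / √(γ 0) :=
          (le_div_iff₀ hg).2 (alpha_mul_sqrt_gamma_zero_le hQ hγ0 hα hroot hrec k)
      _ ≤ α 0 * (2 * √(γ 0) * √Q / (√(γ 0) * k + 2 * √Q)) / √(γ 0) := by
          have := hα 0; gcongr
      _ = 2 * √Q * α 0 / (√(γ 0) * k + 2 * √Q) := by field_simp

end Recursion

/-- Lemma A.5 (case `q = 0`): bounds on `α_k` and on `∏ 1/(1+α_i)`. -/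
theorem stmt_15 (γ₀ Q : ℝ) (hγ₀ : 0 < γ₀) (hQ : 0 < Q)
    (α γ : ℕ → ℝ)
    (hαpos : ∀ k, 0 < α k)
    (hroot : ∀ k, Q * (α k) ^ 2 = γ k * (1 + α k))
    (h0 : γ 0 = γ₀)
    (hrec : ∀ k, γ (k + 1) = γ k / (1 + α k)) :
    (∀ k : ℕ, 1 ≤ k →
      Q / (Real.sqrt γ₀ * k + Real.sqrt Q) ^ 2
        ≤ ∏ i ∈ Finset.range k, 1 / (1 + α i) ∧
      (∏ i ∈ Finset.range k, 1 / (1 + α i))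
        ≤ 4 * Q / (Real.sqrt γ₀ * k + 2 * Real.sqrt Q) ^ 2) ∧
    (∀ k : ℕ,
      Real.sqrt γ₀ / (Real.sqrt γ₀ * k + Real.sqrt Q) ≤ α k ∧
      α k ≤ 2 * Real.sqrt Q * α 0 / (Real.sqrt γ₀ * k + 2 * Real.sqrt Q)) := by
  subst h0
  exact ⟨fun k _ => prod_one_div_one_add_mem_Icc hQ hγ₀ hαpos hroot hrec k,
    alpha_mem_Icc hQ hγ₀ hαpos hroot hrec⟩
end

section
/- Let γ₀ > 0, Q > 0, q ≥ 0 and define (α_k), (γ_k) by Q α_k² = γ_k (1+α_k) with α_k > 0 and γ_{k+1} = (γ_k + α_k q)/(1 + α_k). Then γ_k > 0, min{γ₀, q} ≤ γ_k ≤ max{γ₀, q} for all k, and γ_k → q as k → ∞. -/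
open Filter

/-- Lemma A.5 (general `q ≥ 0`): positivity, uniform bounds and convergence of `γ_k`. -/
theorem stmt_16 (γ₀ Q q : ℝ) (hγ₀ : 0 < γ₀) (hQ : 0 < Q) (hq : 0 ≤ q)
    (α γ : ℕ → ℝ)
    (hαpos : ∀ k, 0 < α k)
    (hroot : ∀ k, Q * (α k) ^ 2 = γ k * (1 + α k))
    (h0 : γ 0 = γ₀)
    (hrec : ∀ k, γ (k + 1) = (γ k + α k * q) / (1 + α k)) :
    (∀ k, 0 < γ k ∧ min γ₀ q ≤ γ k ∧ γ k ≤ max γ₀ q) ∧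
    Tendsto γ atTop (nhds q) := by
  have hαn : ∀ k, (0:ℝ) < 1 + α k := fun k => by linarith [hαpos k]
  have hdiff : ∀ k, γ (k+1) - q = (γ k - q) / (1 + α k) := by
    intro k
    rw [eq_div_iff (hαn k).ne', hrec k, sub_mul, div_mul_cancel₀ _ (hαn k).ne']
    ring
  have hpos : ∀ k, 0 < γ k := by
    intro k; induction k with
    | zero => rw [h0]; exact hγ₀
    | succ n ih =>
      rw [hrec n]
      exact div_pos (by nlinarith [hαpos n, mul_nonneg (hαpos n).le hq]) (hαn n)
  have hlb : ∀ k, min γ₀ q ≤ γ k := by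
    intro k; induction k with
    | zero => rw [h0]; exact min_le_left _ _
    | succ n ih =>
      rw [hrec n, le_div_iff₀ (hαn n)]
      have h2 := min_le_right γ₀ q
      nlinarith [hαpos n]
  have hub : ∀ k, γ k ≤ max γ₀ q := by
    intro k; induction k with
    | zero => rw [h0]; exact le_max_left _ _
    | succ n ih =>
      rw [hrec n, div_le_iff₀ (hαn n)]
      have h2 := le_max_right γ₀ q
      nlinarith [hαpos n]
  refine ⟨fun k => ⟨hpos k, hlb k, hub k⟩, ?_⟩
  have hd : ∀ k, |γ (k+1) - q| = |γ k - q| / (1 + α k) := by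
    intro k; rw [hdiff k, abs_div, abs_of_pos (hαn k)]
  have hmono : ∀ k, |γ (k+1) - q| ≤ |γ k - q| := fun k => by
    rw [hd k]; exact div_le_self (abs_nonneg _) (by linarith [hαpos k])
  have hanti : Antitone (fun k => |γ k - q|) := antitone_nat_of_succ_le hmono
  have hbdd : BddBelow (Set.range fun k => |γ k - q|) :=
    ⟨0, by rintro x ⟨k, rfl⟩; exact abs_nonneg _⟩
  set L := ⨅ k, |γ k - q| with hL
  have hLle : ∀ k, L ≤ |γ k - q| := fun k => ciInf_le hbdd k
  have hL0 : 0 ≤ L := le_ciInf fun k => abs_nonneg _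
  have hLzero : L = 0 := by
    by_contra hne
    have hLpos : 0 < L := lt_of_le_of_ne hL0 (Ne.symm hne)
    have hc : ∀ k, min γ₀ L ≤ γ k := by
      rcases le_or_gt γ₀ q with hcase | hcase
      · intro k
        have := hlb k
        rw [min_eq_left hcase] at this
        exact le_trans (min_le_left _ _) this
      · have hsign : ∀ k, 0 ≤ γ k - q := by
          intro k; induction k with
          | zero => rw [h0]; linarith
          | succ n ih =>
            rw [hdiff n]; exact div_nonneg ih (hαn n).le
        intro k
        have h1 : L ≤ γ k - q := by
          have := hLle k
          rwa [abs_of_nonneg (hsign k)] at this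
        have : L ≤ γ k := by linarith
        exact le_trans (min_le_right _ _) this
    have hcpos : 0 < min γ₀ L := lt_min hγ₀ hLpos
    set δ := Real.sqrt (min γ₀ L / Q) with hδ
    have hδpos : 0 < δ := Real.sqrt_pos.mpr (div_pos hcpos hQ)
    have hαδ : ∀ k, δ ≤ α k := by
      intro k
      have h1 : min γ₀ L / Q ≤ α k ^ 2 := by
        rw [div_le_iff₀ hQ]
        have h2 : min γ₀ L * 1 ≤ γ k * (1 + α k) := by
          have := hαpos k
          nlinarith [hc k, hpos k]
        nlinarith [hroot k]
      calc δ ≤ Real.sqrt (α k ^ 2) := Real.sqrt_le_sqrt h1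
        _ = α k := Real.sqrt_sq (hαpos k).le
    set r := 1 / (1 + δ) with hr
    have hrpos : 0 < r := by positivity
    have hrlt : r < 1 := by
      rw [hr, div_lt_one (by linarith)]; linarith
    have hgeo : ∀ k, |γ k - q| ≤ |γ 0 - q| * r ^ k := by
      intro k; induction k with
      | zero => simp
      | succ n ih =>
        rw [hd n, pow_succ, ← mul_assoc]
        have h1 : |γ n - q| / (1 + α n) ≤ |γ n - q| / (1 + δ) :=
          div_le_div_of_nonneg_left (abs_nonneg _) (by linarith) (by linarith [hαδ n])
        calc |γ n - q| / (1 + α n) ≤ |γ n - q| / (1 + δ) := h1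
          _ = |γ n - q| * r := by rw [hr]; ring
          _ ≤ |γ 0 - q| * r ^ n * r := by
              exact mul_le_mul_of_nonneg_right ih hrpos.le
    have htend : Tendsto (fun k => |γ 0 - q| * r ^ k) atTop (nhds 0) := by
      have := tendsto_pow_atTop_nhds_zero_of_lt_one hrpos.le hrlt
      simpa using this.const_mul (|γ 0 - q|)
    have hev : ∀ᶠ k in atTop, |γ 0 - q| * r ^ k < L :=
      htend.eventually (Filter.Tendsto.eventually_lt_const hLpos tendsto_id) |>.mono (fun k hk => hk)
    obtain ⟨k, hk⟩ := hev.exists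
    exact absurd (lt_of_le_of_lt (le_trans (hLle k) (hgeo k)) hk) (lt_irrefl L)
  have hdtend : Tendsto (fun k => |γ k - q|) atTop (nhds 0) := by
    have := tendsto_atTop_ciInf hanti hbdd
    rwa [← hL, hLzero] at this
  rw [tendsto_iff_dist_tendsto_zero]
  simpa [Real.dist_eq] using hdtend
end

section
/- (Key descent inequality for inexact composite steps) Let f = h + g where h is μ-strongly convex with L-Lipschitz gradient (0 ≤ μ ≤ L) and g is proper closed convex. Fix λ > 0, τ ≥ 0, ε ≥ 0, x ∈ H. Let ĝ ∈ H with ‖ĝ - ∇h(x)‖ ≤ τ/λ, let S = S_{λf}(x,τ,ε) be a type-1 ε-approximation of prox_{λg}(x - λ ĝ), let G = (x - S)/λ, σ = S - prox_{λg}(x - λĝ), and e = λ(∇h(x) - ĝ). Then for all y ∈ H: ε²/(2λ) + f(y) ≥ f(S) + ⟨G, y - x⟩ + (1/λ)⟨σ + e, y - S⟩ + (μ/2)‖y - x‖² + (λ/2)(2 - λL)‖G‖². -/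
/-!
Strong convexity of `h` bounds `h y` from below by its linearization at `x` plus `μ/2 ‖y - x‖²`,
and the Lipschitz gradient bounds `h S` from above by the linearization plus `L/2 ‖S - x‖²`.
The prox objective `g + ‖· - z‖² / (2λ)`, `z = x - λ ĝ`, is `1/λ`-strongly convex, so its minimizer `P` satisfies
a quadratic-growth (three-point) inequality, which the `ε²/(2λ)`-suboptimal point `S` inherits up
to that error. Adding the three bounds, the claim reduces to a Hilbert-space identity, up to the
discarded nonnegative term `‖S - P‖² / (2λ)`.
-/

open RealInnerProductSpace Set Filter Topology

section NormedSpace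

variable {E : Type*} [NormedAddCommGroup E] [NormedSpace ℝ E] {s : Set E} {m t : ℝ} {F : E → ℝ}
  {x y : E}

lemma StrongConvexOn.le_add_smul_sub (hF : StrongConvexOn s m F) (hx : x ∈ s) (hy : y ∈ s)
    (ht₀ : 0 ≤ t) (ht₁ : t ≤ 1) :
    F (x + t • (y - x)) ≤ F x + t * (F y - F x - m / 2 * (1 - t) * ‖y - x‖ ^ 2) := by
  have hseg : (1 - t) • x + t • y = x + t • (y - x) := by module
  have := hF.2 hx hy (sub_nonneg.2 ht₁) ht₀ (by ring)
  rw [hseg, norm_sub_rev] at this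
  simp only [smul_eq_mul] at this
  linarith

lemma StrongConvexOn.add_le_of_isMinOn_s19 (hF : StrongConvexOn s m F) (hmin : IsMinOn F s x)
    (hx : x ∈ s) (hy : y ∈ s) :
    F x + m / 2 * ‖y - x‖ ^ 2 ≤ F y := by
  have hgap : ∀ t ∈ Ioc (0 : ℝ) 1, m / 2 * (1 - t) * ‖y - x‖ ^ 2 ≤ F y - F x := by
    rintro t ⟨ht₀, ht₁⟩
    have := (hF.le_add_smul_sub hx hy ht₀.le ht₁).trans'
      (hmin (hF.1.add_smul_sub_mem hx hy ⟨ht₀.le, ht₁⟩))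
    nlinarith
  have hlim : Tendsto (fun t : ℝ => m / 2 * (1 - t) * ‖y - x‖ ^ 2) (𝓝[>] 0)
      (𝓝 (m / 2 * (1 - 0) * ‖y - x‖ ^ 2)) :=
    (Continuous.tendsto (by fun_prop) 0).mono_left nhdsWithin_le_nhds
  have := le_of_tendsto hlim (eventually_of_mem (Ioc_mem_nhdsGT zero_lt_one) hgap)
  linarith

end NormedSpace

section InnerProductSpace

variable {H : Type*} [NormedAddCommGroup H] [InnerProductSpace ℝ H]

lemma ConvexOn.strongConvexOn_add_norm_sub_sq {s : Set H} {g : H → ℝ} (hg : ConvexOn ℝ s g)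
    (m : ℝ) (z : H) :
    StrongConvexOn s m fun w => g w + m / 2 * ‖w - z‖ ^ 2 := by
  rw [strongConvexOn_iff_convex]
  have haff : ConvexOn ℝ s fun w => g w + (-m) * ⟪z, w⟫ + m / 2 * ‖z‖ ^ 2 :=
    (hg.add (((-m) • innerₗ H z).convexOn hg.1)).add_const _
  refine haff.congr fun w _ => ?_
  dsimp only
  rw [norm_sub_sq_real, real_inner_comm]
  ring

lemma ConvexOn.approx_prox_three_point {g : H → ℝ} {lam δ : ℝ} {z P S : H}
    (hg : ConvexOn ℝ univ g) (hP : IsMinOn (fun w => g w + ‖w - z‖ ^ 2 / (2 * lam)) univ P)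
    (hS : g S + ‖S - z‖ ^ 2 / (2 * lam) ≤ δ + ⨅ w, g w + ‖w - z‖ ^ 2 / (2 * lam)) (y : H) :
    g S + ‖S - z‖ ^ 2 / (2 * lam) + ‖y - P‖ ^ 2 / (2 * lam)
      ≤ δ + (g y + ‖y - z‖ ^ 2 / (2 * lam)) := by
  have hΦ : StrongConvexOn univ lam⁻¹ fun w => g w + ‖w - z‖ ^ 2 / (2 * lam) := by
    convert hg.strongConvexOn_add_norm_sub_sq lam⁻¹ z using 3
    ring
  have hgrowth := hΦ.add_le_of_isMinOn_s19 hP (mem_univ P) (mem_univ y)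
  have hinf : ⨅ w, g w + ‖w - z‖ ^ 2 / (2 * lam) ≤ g P + ‖P - z‖ ^ 2 / (2 * lam) :=
    ciInf_le ⟨_, forall_mem_range.2 fun w => hP (mem_univ w)⟩ P
  have hdiv : ‖y - P‖ ^ 2 / (2 * lam) = lam⁻¹ / 2 * ‖y - P‖ ^ 2 := by ring
  linarith

variable [CompleteSpace H] {F : H → ℝ}

lemma HasGradientAt.hasDerivAt_add_smul {x v g : H} {t : ℝ} (hF : HasGradientAt F g (x + t • v)) :
    HasDerivAt (fun r : ℝ => F (x + r • v)) ⟪g, v⟫ t := by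
  have hline : HasDerivAt (fun r : ℝ => x + r • v) v t := by
    simpa using ((hasDerivAt_id t).smul_const v).const_add x
  simpa [InnerProductSpace.toDual_apply_apply, Function.comp_def] using
    (hasGradientAt_iff_hasFDerivAt.mp hF).comp_hasDerivAt t hline

lemma StrongConvexOn.add_inner_add_le_of_hasGradientAt {s : Set H} {m : ℝ} {x y g : H}
    (hF : StrongConvexOn s m F) (hgrad : HasGradientAt F g x) (hx : x ∈ s) (hy : y ∈ s) :
    F x + ⟪g, y - x⟫ + m / 2 * ‖y - x‖ ^ 2 ≤ F y := by
  have hslope : ∀ t ∈ Ioc (0 : ℝ) 1,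
      t⁻¹ • (F (x + t • (y - x)) - F x) ≤ F y - F x - m / 2 * (1 - t) * ‖y - x‖ ^ 2 := by
    rintro t ⟨ht₀, ht₁⟩
    rw [smul_eq_mul, inv_mul_le_iff₀ ht₀]
    linarith [hF.le_add_smul_sub hx hy ht₀.le ht₁]
  have hderiv : HasDerivAt (fun r : ℝ => F (x + r • (y - x))) ⟪g, y - x⟫ 0 :=
    HasGradientAt.hasDerivAt_add_smul (by simpa using hgrad)
  have hlim : Tendsto (fun t : ℝ => F y - F x - m / 2 * (1 - t) * ‖y - x‖ ^ 2) (𝓝[>] 0)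
      (𝓝 (F y - F x - m / 2 * (1 - 0) * ‖y - x‖ ^ 2)) :=
    (Continuous.tendsto (by fun_prop) 0).mono_left nhdsWithin_le_nhds
  have := le_of_tendsto_of_tendsto (by simpa using hderiv.tendsto_slope_zero_right) hlim
    (eventually_of_mem (Ioc_mem_nhdsGT zero_lt_one) hslope)
  linarith

lemma le_add_inner_add_of_hasGradientAt_of_lipschitz {L : ℝ} {x : H} {gradF : H → H}
    (hgrad : ∀ z, HasGradientAt F (gradF z) z)
    (hLip : ∀ z, ‖gradF z - gradF x‖ ≤ L * ‖z - x‖) (y : H) :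
    F y ≤ F x + ⟪gradF x, y - x⟫ + L / 2 * ‖y - x‖ ^ 2 := by
  set v := y - x
  set ψ : ℝ → ℝ := fun r => F (x + r • v) - r * ⟪gradF x, v⟫ - L / 2 * ‖v‖ ^ 2 * r ^ 2
  have hψ : ∀ r, HasDerivAt ψ (⟪gradF (x + r • v) - gradF x, v⟫ - L * r * ‖v‖ ^ 2) r := by
    intro r
    have := (((hgrad (x + r • v)).hasDerivAt_add_smul (x := x)).sub
      ((hasDerivAt_id r).mul_const ⟪gradF x, v⟫)).sub
      ((hasDerivAt_pow 2 r).const_mul (L / 2 * ‖v‖ ^ 2))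
    exact this.congr_deriv (by rw [inner_sub_left]; ring)
  have hψ_nonpos : ∀ r ∈ interior (Icc (0 : ℝ) 1), deriv ψ r ≤ 0 := by
    intro r hr
    rw [interior_Icc] at hr
    rw [(hψ r).deriv, sub_nonpos]
    calc ⟪gradF (x + r • v) - gradF x, v⟫ ≤ ‖gradF (x + r • v) - gradF x‖ * ‖v‖ :=
          real_inner_le_norm _ _
      _ ≤ L * ‖r • v‖ * ‖v‖ := by
          gcongr
          simpa using hLip (x + r • v)
      _ = L * r * ‖v‖ ^ 2 := by rw [norm_smul, Real.norm_of_nonneg hr.1.le]; ring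
  have hanti : AntitoneOn ψ (Icc 0 1) :=
    antitoneOn_of_deriv_nonpos (convex_Icc 0 1) (HasDerivAt.continuousOn fun r _ => hψ r)
      (fun r _ => (hψ r).differentiableAt.differentiableWithinAt) hψ_nonpos
  have hψ₁ : ψ 1 = F y - ⟪gradF x, v⟫ - L / 2 * ‖v‖ ^ 2 := by simp [ψ, v]
  have hψ₀ : ψ 0 = F x := by simp [ψ]
  linarith [hanti (left_mem_Icc.2 zero_le_one) (right_mem_Icc.2 zero_le_one) zero_le_one]

end InnerProductSpace

lemma prox_grad_step_identity {H : Type*} [NormedAddCommGroup H] [InnerProductSpace ℝ H]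
    {lam : ℝ} (hlam : lam ≠ 0) (L : ℝ) (x y S P d a : H) :
    ⟪d, y - x⟫ - ⟪d, S - x⟫ - L / 2 * ‖S - x‖ ^ 2
        + ‖S - (x - lam • a)‖ ^ 2 / (2 * lam) - ‖y - (x - lam • a)‖ ^ 2 / (2 * lam)
        + ‖y - P‖ ^ 2 / (2 * lam)
      = ⟪lam⁻¹ • (x - S), y - x⟫ + (1 / lam) * ⟪(S - P) + lam • (d - a), y - S⟫
        + lam / 2 * (2 - lam * L) * ‖lam⁻¹ • (x - S)‖ ^ 2 + ‖S - P‖ ^ 2 / (2 * lam) := by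
  simp only [← real_inner_self_eq_norm_sq, inner_sub_left, inner_sub_right, inner_add_left,
    real_inner_smul_left, real_inner_smul_right, real_inner_comm x y, real_inner_comm x S,
    real_inner_comm y S, real_inner_comm y P, real_inner_comm S P, real_inner_comm x d,
    real_inner_comm y d, real_inner_comm S d, real_inner_comm x a, real_inner_comm y a,
    real_inner_comm S a]
  field_simp
  ring

theorem stmt_19_general {H : Type*} [NormedAddCommGroup H] [InnerProductSpace ℝ H]
    [CompleteSpace H]
    (μ L : ℝ)
    (h g : H → ℝ) (gradh : H → H)
    (hh : StrongConvexOn Set.univ μ h)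
    (hgrad : ∀ z : H, HasGradientAt h (gradh z) z)
    (hLip : ∀ a b : H, ‖gradh a - gradh b‖ ≤ L * ‖a - b‖)
    (hg : ConvexOn ℝ Set.univ g)
    (lam ε : ℝ) (hlam : 0 < lam)
    (x ghat S P : H)
    (hP : IsMinOn (fun y => g y + ‖y - (x - lam • ghat)‖ ^ 2 / (2 * lam)) Set.univ P)
    (hS : g S + ‖S - (x - lam • ghat)‖ ^ 2 / (2 * lam)
      ≤ ε ^ 2 / (2 * lam)
        + ⨅ y : H, g y + ‖y - (x - lam • ghat)‖ ^ 2 / (2 * lam)) :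
    ∀ y : H,
      ε ^ 2 / (2 * lam) + (h y + g y)
        ≥ (h S + g S) + ⟪lam⁻¹ • (x - S), y - x⟫
          + (1 / lam) * ⟪(S - P) + lam • (gradh x - ghat), y - S⟫
          + μ / 2 * ‖y - x‖ ^ 2
          + lam / 2 * (2 - lam * L) * ‖lam⁻¹ • (x - S)‖ ^ 2 := by
  intro y
  have hlower := hh.add_inner_add_le_of_hasGradientAt (hgrad x) (mem_univ x) (mem_univ y)
  have hupper := le_add_inner_add_of_hasGradientAt_of_lipschitz hgrad (fun z => hLip z x) S
  have hprox := hg.approx_prox_three_point hP hS y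
  have hidentity := prox_grad_step_identity hlam.ne' L x y S P (gradh x) ghat
  have hslack : 0 ≤ ‖S - P‖ ^ 2 / (2 * lam) := by positivity
  linarith

/-- Key descent inequality (Lemma 4.1) for inexact composite proximal-gradient steps. -/
theorem stmt_19 {H : Type*} [NormedAddCommGroup H] [InnerProductSpace ℝ H]
    [CompleteSpace H]
    (μ L : ℝ) (hμ : 0 ≤ μ) (hμL : μ ≤ L)
    (h g : H → ℝ) (gradh : H → H)
    (hh : StrongConvexOn Set.univ μ h)
    (hgrad : ∀ z : H, HasGradientAt h (gradh z) z)
    (hLip : ∀ a b : H, ‖gradh a - gradh b‖ ≤ L * ‖a - b‖)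
    (hg : ConvexOn ℝ Set.univ g) (hglsc : LowerSemicontinuous g)
    (lam τ ε : ℝ) (hlam : 0 < lam) (hτ : 0 ≤ τ) (hε : 0 ≤ ε)
    (x ghat S P : H)
    (hghat : ‖ghat - gradh x‖ ≤ τ / lam)
    (hP : IsMinOn (fun y => g y + ‖y - (x - lam • ghat)‖ ^ 2 / (2 * lam)) Set.univ P)
    (hS : g S + ‖S - (x - lam • ghat)‖ ^ 2 / (2 * lam)
      ≤ ε ^ 2 / (2 * lam)
        + ⨅ y : H, g y + ‖y - (x - lam • ghat)‖ ^ 2 / (2 * lam)) :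
    ∀ y : H,
      ε ^ 2 / (2 * lam) + (h y + g y)
        ≥ (h S + g S) + ⟪lam⁻¹ • (x - S), y - x⟫
          + (1 / lam) * ⟪(S - P) + lam • (gradh x - ghat), y - S⟫
          + μ / 2 * ‖y - x‖ ^ 2
          + lam / 2 * (2 - lam * L) * ‖lam⁻¹ • (x - S)‖ ^ 2 :=
  stmt_19_general μ L h g gradh hh hgrad hLip hg lam ε hlam x ghat S P hP hS
end
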